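/- Let A ∈ ℝ^{n×d}, b ∈ ℝ^n with b ≥ 0 entrywise and ‖b‖_1 ≤ 1, R > 2 with ‖A‖ ≤ R, and β ∈ (0, 0.1). Let L_exp(x) := 0.5 ‖⟨exp(Ax), 1_n⟩^{-1} exp(Ax) − b‖_2² and let H(x) := ∇²L_exp(x) be its Hessian. Then for all x, y ∈ ℝ^d with ‖x‖_2 ≤ R, ‖y‖_2 ≤ R, ‖A(x − y)‖_∞ < 0.01, ⟨exp(Ax), 1_n⟩ ≥ β, and ⟨exp(Ay), 1_n⟩ ≥ β, we have ‖H(x) − H(y)‖ ≤ β^{-2} n^{1.5} exp(20R²) · ‖x − y‖_2, where ‖·‖ on matrices is the spectral norm. -/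

import Mathlib

open Matrix

/-- The Euclidean (ℓ2) norm of a vector in ℝ^n. -/
noncomputable def l2norm {n : ℕ} (u : Fin n → ℝ) : ℝ := Real.sqrt (∑ i, u i ^ 2)

/-- The ℓ1 norm of a vector in ℝ^n. -/
noncomputable def l1norm {n : ℕ} (u : Fin n → ℝ) : ℝ := ∑ i, |u i|

/-- The supremum (ℓ∞) norm of a vector in ℝ^n. -/
noncomputable def linfNorm {n : ℕ} (u : Fin n → ℝ) : ℝ := ⨆ i, |u i|

/-- The spectral (ℓ2 operator) norm of a matrix. -/
noncomputable def specNorm {n d : ℕ} (A : Matrix (Fin n) (Fin d) ℝ) : ℝ :=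
  ‖LinearMap.toContinuousLinearMap (Matrix.toEuclideanLin A)‖

/-- The softmax function f(z) = ⟨exp(Az), 1_n⟩⁻¹ · exp(Az). -/
noncomputable def softmaxFn {n d : ℕ} (A : Matrix (Fin n) (Fin d) ℝ) (z : Fin d → ℝ) :
    Fin n → ℝ :=
  (∑ i, Real.exp (A.mulVec z i))⁻¹ • fun i => Real.exp (A.mulVec z i)

/-- The Hessian matrix of a function L : ℝ^d → ℝ, as the d × d matrix of second
partial derivatives. -/
noncomputable def hessMat {d : ℕ} (L : (Fin d → ℝ) → ℝ) (x : Fin d → ℝ) :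
    Matrix (Fin d) (Fin d) ℝ :=
  Matrix.of fun i j => fderiv ℝ (fun y => fderiv ℝ L y (Pi.single j 1)) x (Pi.single i 1)

/-!
Write `σ` for the softmax. Then `L_exp(x) = ℓ(Ax)` with `ℓ(u) = ½‖σ(u) - b‖²`, so
`H(x) = Aᵀ G(σ(Ax)) A`, where the Hessian `G` of `ℓ` is a polynomial matrix in the probability
vector `p = σ(u)`. On the simplex every entry of `G` is `24`-Lipschitz for the `ℓ¹` distance, and
`σ` is `4`-Lipschitz from `ℓ^∞` to `ℓ¹` because `σ(v)ₖ ≥ e^{-2t} σ(u)ₖ` when `‖u - v‖_∞ ≤ t`.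
Bounding the spectral norm of `G(σ(Ax)) - G(σ(Ay))` by its Frobenius norm gives
`‖H(x) - H(y)‖ ≤ ‖A‖² · n · 96 ‖A(x - y)‖_∞ ≤ 96 n R³ ‖x - y‖₂`, and `β⁻² ≥ 100`,
`R³ ≤ exp(20R²)` absorb the constants.
-/

open Finset
open scoped Matrix.Norms.L2Operator

lemma specNorm_eq_l2_opNorm {n d : ℕ} (A : Matrix (Fin n) (Fin d) ℝ) : specNorm A = ‖A‖ := rfl

lemma l2norm_eq_norm_toLp {n : ℕ} (u : Fin n → ℝ) : l2norm u = ‖WithLp.toLp 2 u‖ := by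
  simp [l2norm, EuclideanSpace.norm_eq]

lemma abs_le_l2norm {n : ℕ} (u : Fin n → ℝ) (k : Fin n) : |u k| ≤ l2norm u := by
  rw [l2norm_eq_norm_toLp, ← Real.norm_eq_abs]
  exact PiLp.norm_apply_le (WithLp.toLp 2 u) k

lemma mem_Icc_of_l1norm_le_one {n : ℕ} {b : Fin n → ℝ} (hb0 : ∀ i, 0 ≤ b i)
    (hb1 : l1norm b ≤ 1) (m : Fin n) : b m ∈ Set.Icc 0 1 :=
  ⟨hb0 m, (le_abs_self _).trans ((single_le_sum (f := fun i => |b i|)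
    (fun _ _ => abs_nonneg _) (mem_univ m)).trans hb1)⟩

lemma l2norm_mulVec_le {n d : ℕ} (A : Matrix (Fin n) (Fin d) ℝ) (v : Fin d → ℝ) :
    l2norm (A *ᵥ v) ≤ specNorm A * l2norm v := by
  rw [l2norm_eq_norm_toLp, l2norm_eq_norm_toLp]
  exact A.l2_opNorm_mulVec (WithLp.toLp 2 v)

lemma Matrix.l2_opNorm_le_sqrt_sum_sq {m n : Type*} [Fintype m] [Fintype n] [DecidableEq n]
    (M : Matrix m n ℝ) : ‖M‖ ≤ √(∑ i, ∑ j, M i j ^ 2) := by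
  refine ContinuousLinearMap.opNorm_le_bound _ (Real.sqrt_nonneg _) fun x => ?_
  rw [← Real.sqrt_sq (norm_nonneg x), ← Real.sqrt_mul (by positivity),
    EuclideanSpace.norm_eq]
  refine Real.sqrt_le_sqrt ?_
  rw [EuclideanSpace.real_norm_sq_eq x, Finset.sum_mul]
  gcongr with i
  simpa [Matrix.l2_opNorm_def, mulVec, dotProduct] using sum_mul_sq_le_sq_mul_sq univ (M i) x

lemma specNorm_le_card_mul_of_abs_le {n : ℕ} (M : Matrix (Fin n) (Fin n) ℝ) {c : ℝ}
    (hc : 0 ≤ c) (hM : ∀ i j, |M i j| ≤ c) : specNorm M ≤ n * c := by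
  calc specNorm M ≤ √(∑ i, ∑ j, M i j ^ 2) := M.l2_opNorm_le_sqrt_sum_sq
    _ ≤ √(∑ i : Fin n, ∑ j : Fin n, c ^ 2) := by
        refine Real.sqrt_le_sqrt (sum_le_sum fun i _ => sum_le_sum fun j _ => ?_)
        exact sq_le_sq' (abs_le.1 (hM i j)).1 (abs_le.1 (hM i j)).2
    _ = n * c := by
        simp only [sum_const, card_univ, Fintype.card_fin, nsmul_eq_mul]
        rw [← mul_assoc, ← sq, ← mul_pow, Real.sqrt_sq (by positivity)]

lemma specNorm_transpose_mul_mul_le {n d : ℕ} (A : Matrix (Fin n) (Fin d) ℝ)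
    (M : Matrix (Fin n) (Fin n) ℝ) : specNorm (Aᵀ * M * A) ≤ specNorm A ^ 2 * specNorm M := by
  simp only [specNorm_eq_l2_opNorm]
  calc ‖Aᵀ * M * A‖ ≤ ‖Aᵀ‖ * ‖M‖ * ‖A‖ :=
        (Matrix.l2_opNorm_mul _ _).trans
          (mul_le_mul_of_nonneg_right (Matrix.l2_opNorm_mul _ _) (norm_nonneg _))
    _ = ‖A‖ ^ 2 * ‖M‖ := by
        rw [← conjTranspose_eq_transpose_of_trivial, Matrix.l2_opNorm_conjTranspose]; ring

lemma ContinuousLinearMap.apply_eq_sum_mul_apply_single {n : ℕ} (φ : (Fin n → ℝ) →L[ℝ] ℝ)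
    (w : Fin n → ℝ) : φ w = ∑ l, w l * φ (Pi.single l 1) := by
  conv_lhs => rw [← Finset.univ_sum_single w]
  rw [map_sum]
  refine sum_congr rfl fun l _ => ?_
  rw [← smul_eq_mul, ← map_smul, ← Pi.single_smul, smul_eq_mul, mul_one]

lemma Matrix.hasFDerivAt_mulVec {n d : ℕ} (A : Matrix (Fin n) (Fin d) ℝ) (x : Fin d → ℝ) :
    HasFDerivAt (fun z => A *ᵥ z) (LinearMap.toContinuousLinearMap A.mulVecLin) x :=
  (LinearMap.toContinuousLinearMap A.mulVecLin).hasFDerivAt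

lemma ContinuousLinearMap.ext_single {n : ℕ} {φ ψ : (Fin n → ℝ) →L[ℝ] ℝ}
    (h : ∀ l, φ (Pi.single l 1) = ψ (Pi.single l 1)) : φ = ψ := by
  ext w
  simp only [apply_eq_sum_mul_apply_single _ w, h]

lemma hessMat_comp_mulVec {n d : ℕ} (ℓ : (Fin n → ℝ) → ℝ) (A : Matrix (Fin n) (Fin d) ℝ)
    (x : Fin d → ℝ) (hℓ : Differentiable ℝ ℓ)
    (hℓ' : ∀ l, DifferentiableAt ℝ (fun u => fderiv ℝ ℓ u (Pi.single l 1)) (A *ᵥ x)) :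
    hessMat (fun z => ℓ (A *ᵥ z)) x = Aᵀ * hessMat ℓ (A *ᵥ x) * A := by
  have hgrad : ∀ j, (fun y => fderiv ℝ (fun z => ℓ (A *ᵥ z)) y (Pi.single j 1))
      = fun y => ∑ l, A l j * fderiv ℝ ℓ (A *ᵥ y) (Pi.single l 1) := by
    intro j
    ext y
    have h : HasFDerivAt (fun z => ℓ (A *ᵥ z)) ((fderiv ℝ ℓ (A *ᵥ y)).comp _) y :=
      (hℓ _).hasFDerivAt.comp y (A.hasFDerivAt_mulVec y)
    rw [h.fderiv, ContinuousLinearMap.comp_apply,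
      ContinuousLinearMap.apply_eq_sum_mul_apply_single]
    simp [mulVec_single]
  ext i j
  have hder : HasFDerivAt (fun y => ∑ l, A l j * fderiv ℝ ℓ (A *ᵥ y) (Pi.single l 1)) _ x :=
    HasFDerivAt.fun_sum (u := univ) fun l _ =>
      ((hℓ' l).hasFDerivAt.comp x (A.hasFDerivAt_mulVec x)).const_mul (A l j)
  rw [hessMat, of_apply, hgrad, hder.fderiv]
  simp only [_root_.sum_apply, _root_.smul_apply, ContinuousLinearMap.comp_apply, smul_eq_mul,
    LinearMap.coe_toContinuousLinearMap', mulVecLin_apply, mulVec_single_one,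
    ContinuousLinearMap.apply_eq_sum_mul_apply_single _ (A.col i), col_apply, Matrix.mul_apply,
    hessMat, of_apply, transpose_apply, mul_sum, sum_mul]
  exact sum_congr rfl fun l _ => sum_congr rfl fun k _ => by ring

section Softmax

open Real

variable {n : ℕ}

noncomputable def softmax (u : Fin n → ℝ) : Fin n → ℝ :=
  (∑ i, exp (u i))⁻¹ • fun i => exp (u i)

lemma softmax_apply (u : Fin n → ℝ) (k : Fin n) :
    softmax u k = exp (u k) / ∑ i, exp (u i) := by
  simp [softmax, div_eq_inv_mul]

lemma sum_exp_pos [NeZero n] (u : Fin n → ℝ) : 0 < ∑ i, exp (u i) :=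
  sum_pos (fun _ _ => exp_pos _) univ_nonempty

lemma softmax_mem_stdSimplex [NeZero n] (u : Fin n → ℝ) : softmax u ∈ stdSimplex ℝ (Fin n) := by
  refine ⟨fun k => ?_, ?_⟩
  · rw [softmax_apply]; exact div_nonneg (exp_pos _).le (sum_exp_pos u).le
  · simp_rw [softmax_apply, ← sum_div, div_self (sum_exp_pos u).ne']

lemma hasFDerivAt_softmax_apply (u : Fin n → ℝ) (k : Fin n) :
    HasFDerivAt (fun u => softmax u k)
      (softmax u k • ((ContinuousLinearMap.proj k : (Fin n → ℝ) →L[ℝ] ℝ) -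
        ∑ m, softmax u m • ContinuousLinearMap.proj m)) u := by
  have : NeZero n := ⟨k.pos.ne'⟩
  have hexp : ∀ i, HasFDerivAt (fun u : Fin n → ℝ => exp (u i))
      (exp (u i) • ContinuousLinearMap.proj i) u := fun i => (hasFDerivAt_apply i u).exp
  have hsum := HasFDerivAt.fun_sum (u := univ) fun i _ => hexp i
  have hinv := (hasDerivAt_inv (sum_exp_pos u).ne').comp_hasFDerivAt u hsum
  refine ((hexp k).mul hinv).congr_fderiv ?_ |>.congr_of_eventuallyEq ?_
  · ext v
    have hS := (sum_exp_pos u).ne'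
    simp only [softmax_apply, neg_smul, smul_neg, Function.comp_apply, _root_.add_apply,
      _root_.neg_apply, _root_.smul_apply, _root_.sum_apply, ContinuousLinearMap.proj_apply,
      smul_eq_mul, _root_.sub_apply, div_mul_eq_mul_div, ← sum_div]
    field_simp
    ring
  · exact Filter.Eventually.of_forall fun w => softmax_apply w k

lemma exp_neg_mul_softmax_le {u v : Fin n → ℝ} {t : ℝ} (huv : ∀ i, |u i - v i| ≤ t) (k : Fin n) :
    exp (-(2 * t)) * softmax u k ≤ softmax v k := by
  have : NeZero n := ⟨k.pos.ne'⟩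
  have hnum : exp (-t) * exp (u k) ≤ exp (v k) := by
    rw [← exp_add]; exact exp_le_exp.2 (by linarith [(abs_le.1 (huv k)).2])
  have hden : ∑ i, exp (v i) ≤ exp t * ∑ i, exp (u i) := by
    rw [mul_sum]
    refine sum_le_sum fun i _ => ?_
    rw [← exp_add]; exact exp_le_exp.2 (by linarith [(abs_le.1 (huv i)).1])
  have hsplit : exp (-(2 * t)) = exp (-t) / exp t := by
    rw [← exp_sub]; ring_nf
  rw [softmax_apply, softmax_apply, hsplit, div_mul_div_comm,
    div_le_div_iff₀ (by positivity) (sum_exp_pos v)]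
  calc exp (-t) * exp (u k) * ∑ i, exp (v i) ≤ exp (v k) * (exp t * ∑ i, exp (u i)) :=
        mul_le_mul hnum hden (sum_exp_pos v).le (exp_pos _).le
    _ = _ := by ring

lemma softmax_sub_softmax_le {u v : Fin n → ℝ} {t : ℝ} (huv : ∀ i, |u i - v i| ≤ t)
    (k : Fin n) : softmax u k - softmax v k ≤ 2 * t * softmax u k := by
  have : NeZero n := ⟨k.pos.ne'⟩
  have h1 := exp_neg_mul_softmax_le huv k
  have h2 := add_one_le_exp (-(2 * t))
  nlinarith [(softmax_mem_stdSimplex u).1 k]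

lemma sum_abs_softmax_sub_le [NeZero n] {u v : Fin n → ℝ} {t : ℝ}
    (huv : ∀ i, |u i - v i| ≤ t) : ∑ k, |softmax u k - softmax v k| ≤ 4 * t := by
  have hvu : ∀ i, |v i - u i| ≤ t := fun i => abs_sub_comm (v i) (u i) ▸ huv i
  calc ∑ k, |softmax u k - softmax v k| ≤ ∑ k, 2 * t * (softmax u k + softmax v k) := by
        refine sum_le_sum fun k _ => abs_le.2 ⟨?_, ?_⟩
        all_goals
          have ht : 0 ≤ t := (abs_nonneg _).trans (huv k)
          nlinarith [softmax_sub_softmax_le huv k, softmax_sub_softmax_le hvu k,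
            (softmax_mem_stdSimplex u).1 k, (softmax_mem_stdSimplex v).1 k]
    _ = 4 * t := by
        rw [← mul_sum, sum_add_distrib, (softmax_mem_stdSimplex u).2,
          (softmax_mem_stdSimplex v).2]; ring

end Softmax

section SoftmaxLoss

open Real

variable {n : ℕ}

lemma sum_mul_ite_sub (a : Fin n → ℝ) (c : ℝ) (l : Fin n) :
    ∑ k, a k * ((if k = l then 1 else 0) - c) = a l - c * ∑ k, a k := by
  simp [mul_sub, sum_sub_distrib, mul_sum, mul_comm]

noncomputable def softmaxLoss (b u : Fin n → ℝ) : ℝ := 0.5 * l2norm (softmax u - b) ^ 2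

noncomputable def softmaxLossGrad (b p : Fin n → ℝ) (l : Fin n) : ℝ :=
  p l * (p l - b l - ∑ m, p m * (p m - b m))

noncomputable def softmaxLossHess (b p : Fin n → ℝ) : Matrix (Fin n) (Fin n) ℝ :=
  of fun k l => (2 * p l - b l - ∑ m, p m * (p m - b m)) * p l * ((if l = k then 1 else 0) - p k)
    - p l * p k * (2 * p k - b k - ∑ m, p m * (2 * p m - b m))

lemma hasFDerivAt_softmaxLoss (b u : Fin n → ℝ) :
    HasFDerivAt (softmaxLoss b)
      (∑ l, softmaxLossGrad b (softmax u) l • (ContinuousLinearMap.proj l : (Fin n → ℝ) →L[ℝ] ℝ))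
      u := by
  have h : softmaxLoss b = fun u => 0.5 * ∑ k, (softmax u k - b k) ^ 2 := by
    ext u
    rw [softmaxLoss, l2norm, Real.sq_sqrt (sum_nonneg fun _ _ => sq_nonneg _)]
    rfl
  rw [h]
  refine ((HasFDerivAt.fun_sum (u := univ) fun k _ =>
    ((hasFDerivAt_softmax_apply u k).sub_const (b k)).pow 2).const_mul 0.5).congr_fderiv
    (ContinuousLinearMap.ext_single fun l => ?_)
  simp only [Nat.add_one_sub_one, pow_one, nsmul_eq_mul, Nat.cast_ofNat, _root_.smul_apply,
    _root_.sum_apply, _root_.sub_apply, ContinuousLinearMap.proj_apply, Pi.single_apply,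
    smul_eq_mul, mul_ite, mul_one, mul_zero, sum_ite_eq', mem_univ, ↓reduceIte]
  simp only [← mul_assoc, sum_mul_ite_sub, softmaxLossGrad]
  have hs : ∑ m, 2 * (softmax u m - b m) * softmax u m
      = 2 * ∑ m, softmax u m * (softmax u m - b m) := by
    rw [mul_sum]; exact sum_congr rfl fun _ _ => by ring
  rw [hs]; ring

lemma hasFDerivAt_softmaxLossGrad (b u : Fin n → ℝ) (l : Fin n) :
    HasFDerivAt (fun u => softmaxLossGrad b (softmax u) l)
      (∑ k, softmaxLossHess b (softmax u) k l • (ContinuousLinearMap.proj k : (Fin n → ℝ) →L[ℝ] ℝ))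
      u := by
  have hσ := hasFDerivAt_softmax_apply u
  have hs := HasFDerivAt.fun_sum (u := univ) fun m _ => (hσ m).mul ((hσ m).sub_const (b m))
  refine ((hσ l).mul (((hσ l).sub_const (b l)).sub hs)).congr_fderiv
    (ContinuousLinearMap.ext_single fun k => ?_)
  simp only [Pi.mul_apply, Pi.sub_apply, _root_.add_apply, _root_.smul_apply, _root_.sub_apply,
    ContinuousLinearMap.proj_apply, Pi.single_apply, _root_.sum_apply, smul_eq_mul, mul_ite,
    mul_one, mul_zero, sum_ite_eq', mem_univ, ↓reduceIte]
  set p := softmax u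
  have hsum : ∑ x, (p x * (p x * ((if x = k then 1 else 0) - p k))
        + (p x - b x) * (p x * ((if x = k then 1 else 0) - p k)))
      = p k * (2 * p k - b k) - p k * ∑ m, p m * (2 * p m - b m) := by
    refine (sum_congr rfl fun _ _ => by ring).trans
      (sum_mul_ite_sub (fun m => p m * (2 * p m - b m)) (p k) k)
  rw [hsum, softmaxLossHess, of_apply]
  ring

lemma fderiv_softmaxLoss_apply_single (b u : Fin n → ℝ) (l : Fin n) :
    fderiv ℝ (softmaxLoss b) u (Pi.single l 1) = softmaxLossGrad b (softmax u) l := by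
  simp [(hasFDerivAt_softmaxLoss b u).fderiv, Pi.single_apply]

lemma hessMat_softmaxLoss (b u : Fin n → ℝ) :
    hessMat (softmaxLoss b) u = softmaxLossHess b (softmax u) := by
  ext k l
  simp [hessMat, fderiv_softmaxLoss_apply_single, (hasFDerivAt_softmaxLossGrad b u l).fderiv,
    Pi.single_apply]

lemma hessMat_softmaxLoss_comp_mulVec {d : ℕ} (A : Matrix (Fin n) (Fin d) ℝ) (b : Fin n → ℝ)
    (x : Fin d → ℝ) :
    hessMat (fun z => softmaxLoss b (A *ᵥ z)) x
      = Aᵀ * softmaxLossHess b (softmax (A *ᵥ x)) * A := by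
  rw [hessMat_comp_mulVec _ _ _ (fun u => (hasFDerivAt_softmaxLoss b u).differentiableAt)
    fun l => ?_, hessMat_softmaxLoss]
  simp only [fderiv_softmaxLoss_apply_single]
  exact (hasFDerivAt_softmaxLossGrad b _ l).differentiableAt

end SoftmaxLoss

section Perturbation

def Near (M K a a' : ℝ) : Prop := |a| ≤ M ∧ |a'| ≤ M ∧ |a - a'| ≤ K

namespace Near

variable {M N K L a a' c c' : ℝ}

lemma mono (h : Near M K a a') (hKL : K ≤ L) : Near M L a a' :=
  ⟨h.1, h.2.1, h.2.2.trans hKL⟩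

lemma sub (h₁ : Near M K a a') (h₂ : Near N L c c') : Near (M + N) (K + L) (a - c) (a' - c') :=
  ⟨(abs_sub _ _).trans (add_le_add h₁.1 h₂.1), (abs_sub _ _).trans (add_le_add h₁.2.1 h₂.2.1),
    (abs_sub _ _).trans_eq' (by ring_nf) |>.trans (add_le_add h₁.2.2 h₂.2.2)⟩

lemma mul (h₁ : Near M K a a') (h₂ : Near N L c c') :
    Near (M * N) (M * L + K * N) (a * c) (a' * c') := by
  have hM : 0 ≤ M := (abs_nonneg a).trans h₁.1
  have hK : 0 ≤ K := (abs_nonneg _).trans h₁.2.2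
  refine ⟨?_, ?_, ?_⟩
  · rw [abs_mul]; exact mul_le_mul h₁.1 h₂.1 (abs_nonneg _) hM
  · rw [abs_mul]; exact mul_le_mul h₁.2.1 h₂.2.1 (abs_nonneg _) hM
  · calc |a * c - a' * c'| = |a * (c - c') + (a - a') * c'| := by ring_nf
      _ ≤ |a| * |c - c'| + |a - a'| * |c'| := by
          rw [← abs_mul, ← abs_mul]; exact abs_add_le _ _
      _ ≤ M * L + K * N :=
          add_le_add (mul_le_mul h₁.1 h₂.2.2 (abs_nonneg _) hM)
            (mul_le_mul h₁.2.2 h₂.2.1 (abs_nonneg _) hK)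

end Near

variable {n : ℕ}

lemma near_apply_of_mem_stdSimplex {p q : Fin n → ℝ} (hp : p ∈ stdSimplex ℝ (Fin n))
    (hq : q ∈ stdSimplex ℝ (Fin n)) (m : Fin n) : Near 1 |p m - q m| (p m) (q m) := by
  have hpm := mem_Icc_of_mem_stdSimplex hp m
  have hqm := mem_Icc_of_mem_stdSimplex hq m
  exact ⟨abs_le.2 ⟨by linarith [hpm.1], hpm.2⟩, abs_le.2 ⟨by linarith [hqm.1], hqm.2⟩, le_rfl⟩

lemma near_mul_sub_of_mem_Icc {a a' c t : ℝ} (ha : a ∈ Set.Icc 0 1) (ha' : a' ∈ Set.Icc 0 1)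
    (hc : c ∈ Set.Icc 0 1) (ht : 1 ≤ t) : Near t (t * |a - a'|) (t * a - c) (t * a' - c) := by
  obtain ⟨ha0, ha1⟩ := ha
  obtain ⟨ha'0, ha'1⟩ := ha'
  obtain ⟨hc0, hc1⟩ := hc
  refine ⟨abs_le.2 ⟨by nlinarith, by nlinarith⟩, abs_le.2 ⟨by nlinarith, by nlinarith⟩, ?_⟩
  rw [sub_sub_sub_cancel_right, ← mul_sub, abs_mul, abs_of_nonneg (by linarith)]

lemma near_sum_mul_of_mem_stdSimplex {p q x x' : Fin n → ℝ} {M K : ℝ}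
    (hp : p ∈ stdSimplex ℝ (Fin n)) (hq : q ∈ stdSimplex ℝ (Fin n))
    (hx : ∀ m, Near M (K * |p m - q m|) (x m) (x' m)) :
    Near M ((M + K) * ∑ m, |p m - q m|) (∑ m, p m * x m) (∑ m, q m * x' m) := by
  have hbound : ∀ r y : Fin n → ℝ, r ∈ stdSimplex ℝ (Fin n) → (∀ m, |y m| ≤ M) →
      |∑ m, r m * y m| ≤ M := fun r y hr hy => by
    calc |∑ m, r m * y m| ≤ ∑ m, r m * M := by
          refine (abs_sum_le_sum_abs _ _).trans (sum_le_sum fun m _ => ?_)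
          rw [abs_mul, abs_of_nonneg (hr.1 m)]
          exact mul_le_mul_of_nonneg_left (hy m) (hr.1 m)
      _ = M := by rw [← sum_mul, hr.2, one_mul]
  refine ⟨hbound p x hp fun m => (hx m).1, hbound q x' hq fun m => (hx m).2.1, ?_⟩
  rw [← sum_sub_distrib, mul_sum]
  refine (abs_sum_le_sum_abs _ _).trans (sum_le_sum fun m _ => ?_)
  exact ((near_apply_of_mem_stdSimplex hp hq m).mul (hx m)).2.2.trans_eq (by ring)

lemma abs_softmaxLossHess_sub_le {b p q : Fin n → ℝ} (hb : ∀ m, b m ∈ Set.Icc 0 1)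
    (hp : p ∈ stdSimplex ℝ (Fin n)) (hq : q ∈ stdSimplex ℝ (Fin n)) (k l : Fin n) :
    |softmaxLossHess b p k l - softmaxLossHess b q k l| ≤ 24 * ∑ m, |p m - q m| := by
  set ε := ∑ m, |p m - q m|
  have hε : ∀ m, |p m - q m| ≤ ε := fun m =>
    single_le_sum (f := fun m => |p m - q m|) (fun _ _ => abs_nonneg _) (mem_univ m)
  have hpq := near_apply_of_mem_stdSimplex hp hq
  have hr : ∀ m, Near 1 (1 * |p m - q m|) (p m - b m) (q m - b m) := fun m => by
    simpa using near_mul_sub_of_mem_Icc (mem_Icc_of_mem_stdSimplex hp m)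
      (mem_Icc_of_mem_stdSimplex hq m) (hb m) le_rfl
  have hc : ∀ m, Near 2 (2 * |p m - q m|) (2 * p m - b m) (2 * q m - b m) := fun m =>
    near_mul_sub_of_mem_Icc (mem_Icc_of_mem_stdSimplex hp m) (mem_Icc_of_mem_stdSimplex hq m)
      (hb m) one_le_two
  have hs := near_sum_mul_of_mem_stdSimplex hp hq hr
  have hW := near_sum_mul_of_mem_stdSimplex hp hq hc
  have hδ : Near 1 ε ((if l = k then 1 else 0) - p k) ((if l = k then 1 else 0) - q k) := by
    obtain ⟨hp0, hp1⟩ := mem_Icc_of_mem_stdSimplex hp k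
    obtain ⟨hq0, hq1⟩ := mem_Icc_of_mem_stdSimplex hq k
    refine ⟨abs_le.2 ⟨?_, ?_⟩, abs_le.2 ⟨?_, ?_⟩, ?_⟩
    any_goals split_ifs <;> linarith
    rw [sub_sub_sub_cancel_left, abs_sub_comm]; exact hε k
  have hσl := (hpq l).mono (hε l)
  have hσk := (hpq k).mono (hε k)
  have h := ((((hc l).mono (mul_le_mul_of_nonneg_left (hε l) zero_le_two)).sub hs).mul hσl).mul hδ
    |>.sub ((hσl.mul hσk).mul (((hc k).mono (mul_le_mul_of_nonneg_left (hε k) zero_le_two)).sub hW))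
  exact h.2.2.trans_eq (by ring)

lemma specNorm_softmaxLossHess_sub_le [NeZero n] {b u v : Fin n → ℝ} {t : ℝ}
    (hb : ∀ m, b m ∈ Set.Icc 0 1) (huv : ∀ i, |u i - v i| ≤ t) :
    specNorm (softmaxLossHess b (softmax u) - softmaxLossHess b (softmax v)) ≤ 96 * n * t := by
  have ht : 0 ≤ t := (abs_nonneg _).trans (huv 0)
  have hσ := softmax_mem_stdSimplex (n := n)
  calc _ ≤ n * (24 * (4 * t)) := specNorm_le_card_mul_of_abs_le _ (by positivity) fun k l =>
        (abs_softmaxLossHess_sub_le hb (hσ u) (hσ v) k l).trans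
          (mul_le_mul_of_nonneg_left (sum_abs_softmax_sub_le huv) (by norm_num))
    _ = 96 * n * t := by ring

end Perturbation

lemma pow_three_le_exp_mul_sq {R c : ℝ} (hR : 1 ≤ R) (hc : 3 ≤ c) :
    R ^ 3 ≤ Real.exp (c * R ^ 2) :=
  calc R ^ 3 ≤ Real.exp R ^ 3 := by gcongr; linarith [Real.add_one_le_exp R]
    _ = Real.exp (3 * R) := by rw [← Real.exp_nat_mul]; norm_num
    _ ≤ Real.exp (c * R ^ 2) := Real.exp_le_exp.2 (by nlinarith)

/-- The Hessian H of L_exp is Lipschitz: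
‖H(x) − H(y)‖ ≤ β⁻² n^{1.5} exp(20R²) ‖x − y‖₂. -/
theorem stmt_18 {n d : ℕ} (A : Matrix (Fin n) (Fin d) ℝ) (b : Fin n → ℝ)
    (hb0 : ∀ i, 0 ≤ b i) (hb1 : l1norm b ≤ 1)
    (R : ℝ) (hR : 2 < R) (hA : specNorm A ≤ R)
    (β : ℝ) (hβ0 : 0 < β) (hβ1 : β < 0.1) :
    ∀ x y : Fin d → ℝ, l2norm x ≤ R → l2norm y ≤ R →
      linfNorm (A.mulVec (x - y)) < 0.01 →
      β ≤ ∑ i, Real.exp (A.mulVec x i) → β ≤ ∑ i, Real.exp (A.mulVec y i) →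
      specNorm
          (hessMat (fun z => 0.5 * (l2norm (softmaxFn A z - b)) ^ 2) x
            - hessMat (fun z => 0.5 * (l2norm (softmaxFn A z - b)) ^ 2) y) ≤
        (β ^ 2)⁻¹ * (n : ℝ) ^ ((3 : ℝ) / 2) * Real.exp (20 * R ^ 2) * l2norm (x - y) := by
  intro x y _ _ _ hβx _
  have : NeZero n := ⟨by rintro rfl; simp at hβx; linarith⟩
  have hAxy : ∀ i, |(A *ᵥ x) i - (A *ᵥ y) i| ≤ R * l2norm (x - y) := fun i => by
    rw [← Pi.sub_apply, ← mulVec_sub]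
    exact (abs_le_l2norm _ i).trans ((l2norm_mulVec_le A _).trans
      (mul_le_mul_of_nonneg_right hA (Real.sqrt_nonneg _)))
  have hβ : 96 ≤ (β ^ 2)⁻¹ := by
    rw [le_inv_comm₀ (by norm_num) (by positivity)]; nlinarith
  have hR3 : R ^ 3 ≤ Real.exp (20 * R ^ 2) := pow_three_le_exp_mul_sq (by linarith) (by norm_num)
  change specNorm (hessMat (fun z => softmaxLoss b (A *ᵥ z)) x
    - hessMat (fun z => softmaxLoss b (A *ᵥ z)) y) ≤ _
  rw [hessMat_softmaxLoss_comp_mulVec, hessMat_softmaxLoss_comp_mulVec, ← Matrix.sub_mul,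
    ← Matrix.mul_sub]
  calc _ ≤ specNorm A ^ 2 * specNorm (softmaxLossHess b (softmax (A *ᵥ x))
          - softmaxLossHess b (softmax (A *ᵥ y))) := specNorm_transpose_mul_mul_le _ _
    _ ≤ R ^ 2 * (96 * n * (R * l2norm (x - y))) :=
        mul_le_mul (pow_le_pow_left₀ (norm_nonneg _) hA 2)
          (specNorm_softmaxLossHess_sub_le (mem_Icc_of_l1norm_le_one hb0 hb1) hAxy)
          (norm_nonneg _) (by positivity)
    _ = 96 * n * R ^ 3 * l2norm (x - y) := by ring
    _ ≤ _ := by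
        gcongr
        · exact Real.sqrt_nonneg _
        · exact Real.self_le_rpow_of_one_le (by exact_mod_cast NeZero.one_le) (by norm_num)
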